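/- Let α, γ : A → A be algebra endomorphisms such that for some m ≥ 1 and all a₁, …, aₘ ∈ A one has (α(a₁) − γ(a₁))⋯(α(aₘ) − γ(aₘ)) = 0, and suppose (ker α)^N = 0 for some N ≥ 1. Then (ker γ)^(mN) = 0. -/

import Mathlib

/-!
Split a product of `m * N` elements of `ker γ` into `N` consecutive blocks of length `m`.
On elements of `ker γ` the map `α` agrees with `α - γ`, so `α` kills the product of each block;
the blocks are therefore `N` elements of `ker α`, and their product vanishes.
-/

/-- Product of a list of elements in a (possibly non-unital) algebra;
the empty product is set to `0` (it is never used below). -/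
def mprod {R : Type*} [Mul R] [Zero R] : List R → R
  | [] => 0
  | [a] => a
  | a :: l => a * mprod l

section Mprod

variable {R : Type*}

lemma mprod_cons_of_ne_nil [Mul R] [Zero R] (a : R) {l : List R} (hl : l ≠ []) :
    mprod (a :: l) = a * mprod l := by
  cases l with
  | nil => exact absurd rfl hl
  | cons b l => rfl

lemma mprod_append [Semigroup R] [Zero R] :
    ∀ {l₁ l₂ : List R}, l₁ ≠ [] → l₂ ≠ [] → mprod (l₁ ++ l₂) = mprod l₁ * mprod l₂
  | [], _, h₁, _ => absurd rfl h₁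
  | [a], _, _, h₂ => mprod_cons_of_ne_nil a h₂
  | a :: b :: l, l₂, _, h₂ => by
    rw [List.cons_append, mprod_cons_of_ne_nil a (by simp), mprod_append (by simp) h₂,
      mprod_cons_of_ne_nil a (by simp), mul_assoc]

lemma map_mprod {S F : Type*} [Mul R] [Zero R] [Mul S] [Zero S] [FunLike F R S]
    [MulHomClass F R S] (f : F) : ∀ {l : List R}, l ≠ [] → mprod (l.map f) = f (mprod l)
  | [], h => absurd rfl h
  | [_], _ => rfl
  | a :: b :: l, _ => by
    rw [List.map_cons, mprod_cons_of_ne_nil _ (by simp), mprod_cons_of_ne_nil _ (by simp),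
      map_mprod f (by simp), map_mul]

lemma exists_mprod_blocks [Semigroup R] [Zero R] {m : ℕ} (hm : 1 ≤ m) {Q P : R → Prop}
    (hblock : ∀ l : List R, l.length = m → (∀ x ∈ l, Q x) → P (mprod l)) :
    ∀ (n : ℕ) (l : List R), l.length = m * n → (∀ x ∈ l, Q x) →
      ∃ L : List R, L.length = n ∧ (∀ y ∈ L, P y) ∧ mprod L = mprod l
  | 0, l, hl, _ => ⟨[], rfl, by simp, by rw [List.length_eq_zero_iff.1 hl]⟩
  | n + 1, l, hl, hQ => by
    have htake : (l.take m).length = m := by rw [List.length_take]; grind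
    have hdrop : (l.drop m).length = m * n := by rw [List.length_drop]; grind
    obtain ⟨L, hLlen, hLP, hLprod⟩ :=
      exists_mprod_blocks hm hblock n (l.drop m) hdrop fun x hx => hQ x (List.mem_of_mem_drop hx)
    refine ⟨mprod (l.take m) :: L, by simp [hLlen], ?_, ?_⟩
    · exact List.forall_mem_cons.2
        ⟨hblock _ htake fun x hx => hQ x (List.mem_of_mem_take hx), hLP⟩
    · rcases Nat.eq_zero_or_pos n with rfl | hn
      · rw [List.length_eq_zero_iff.1 hLlen, List.take_of_length_le (by grind)]
        rfl
      · rw [mprod_cons_of_ne_nil _ (List.ne_nil_of_length_pos (by omega)), hLprod,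
          ← mprod_append (List.ne_nil_of_length_pos (by omega))
            (List.ne_nil_of_length_pos (by rw [hdrop]; positivity)),
          List.take_append_drop]

end Mprod

theorem stmt6_general {k : Type*} [Field k] {A : Type*}
    [NonUnitalRing A] [Module k A] [SMulCommClass k A A] [IsScalarTower k A A]
    (α γ : A →ₙₐ[k] A) (m N : ℕ) (hm : 1 ≤ m)
    (hαγ : ∀ l : List A, l.length = m → mprod (l.map fun a => α a - γ a) = 0)
    (hker : ∀ l : List A, l.length = N → (∀ x ∈ l, α x = 0) → mprod l = 0) :
    ∀ l : List A, l.length = m * N → (∀ x ∈ l, γ x = 0) → mprod l = 0 := by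
  have hblock (l : List A) (hl : l.length = m) (hγ : ∀ x ∈ l, γ x = 0) : α (mprod l) = 0 := by
    have hne : l ≠ [] := List.ne_nil_of_length_pos (by omega)
    have hα : l.map α = l.map fun a => α a - γ a :=
      List.map_congr_left fun x hx => by rw [hγ x hx, sub_zero]
    rw [← map_mprod α hne, hα, hαγ l hl]
  intro l hl hγ
  obtain ⟨L, hLlen, hLα, hLprod⟩ := exists_mprod_blocks (P := fun y => α y = 0) hm hblock N l hl hγ
  rw [← hLprod]
  exact hker L hLlen hLα

/-- If all `m`-fold products of differences `(α a − γ a)` vanish and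
`(ker α)^N = 0`, then `(ker γ)^(mN) = 0`. -/
theorem stmt6 {k : Type*} [Field k] {A : Type*}
    [NonUnitalRing A] [Module k A] [SMulCommClass k A A] [IsScalarTower k A A]
    (α γ : A →ₙₐ[k] A) (m N : ℕ) (hm : 1 ≤ m) (hN : 1 ≤ N)
    (hαγ : ∀ l : List A, l.length = m → mprod (l.map fun a => α a - γ a) = 0)
    (hker : ∀ l : List A, l.length = N → (∀ x ∈ l, α x = 0) → mprod l = 0) :
    ∀ l : List A, l.length = m * N → (∀ x ∈ l, γ x = 0) → mprod l = 0 :=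
  stmt6_general α γ m N hm hαγ hker
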